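/- Let Ω be a finite nonempty set with a distinguished element ω⁰, and let ρ : Ω × I × J → Δ(Ω) be a transition function, written ρ(ω'|ω,i,j). Let ε > 0, C > 0, and let u, v : Δ(K) × Δ(L) × Ω → ℝ be bounded functions such that: (i) u(p',q',ω) = v(p',q',ω) for all (p',q') and all ω ≠ ω⁰; (ii) for every q' ∈ Δ(L) and ω ∈ Ω the map p' ↦ v(p',q',ω) is C-Lipschitz with respect to ‖·‖₁, and p' ↦ v(p',q',ω⁰) is concave on Δ(K). Let p ∈ Δ(K), q ∈ Δ(L), x a mixed action, x' an ε-convexification of x at p, and y : L → Δ(J). Set r(j) := ∑_{i∈I} ρ(ω⁰|ω⁰,i,j)·x̄^p(i), R := ∑_{j∈J} ȳ^q(j)·r(j), D := inf_{(p',q') ∈ Δ(K)×Δ(L)} (u(p',q',ω⁰) − v(p',q',ω⁰)), and for any mixed action z define E[z](f) := ∑_{i,j,ω} ρ(ω|ω⁰,i,j)·z̄^p(i)·ȳ^q(j)·f(p^z(·|i), q^y(·|j), ω). Then E[x'](u) − E[x](v) ≥ D·R − 2·(1−R)·ε·C. -/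

import Mathlib

/-!
At the state `ω⁰` the gain `u(p^{x'}_i, ·) - v(p^x_i, ·)` splits as
`(u - v)(p^{x'}_i, ·) + (v(p^{x'}_i, ·) - v(p^x_i, ·))`. The first part is at least `D`. The
second averages to something nonnegative over `i ∼ x̄^p`: the posteriors of `x'` are
`β`-mixtures of those of `x`, and `β` carries `x̄^p` onto itself, so Jensen's inequality for the
concave `v(·, q', ω⁰)` applies. At every other state `u = v`, and the Lipschitz bound turns the
posterior shift (at most `ε`) into a loss of at most `εC`. Jensen controls the whole shift at
`ω⁰`, but it is only weighted by `ρ(ω⁰|ω⁰,i,j)`; the rest is again at most `(1 - ρ)εC`, whence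
the factor `2`.
-/

open Finset

noncomputable section
open Classical

/-- `p` is an element of the probability simplex Δ(K). -/
def pSimplex {K : Type*} [Fintype K] (p : K → ℝ) : Prop :=
  (∀ k, 0 ≤ p k) ∧ ∑ k, p k = 1

/-- `x : K → Δ(I)` is a mixed action, written `x k i = x(i|k)`. -/
def MixedAction {K I : Type*} [Fintype K] [Fintype I] (x : K → I → ℝ) : Prop :=
  (∀ k i, 0 ≤ x k i) ∧ ∀ k, ∑ i, x k i = 1

/-- Marginal `x̄^p(i) = ∑_k p(k)·x(i|k)`. -/
def bar {K I : Type*} [Fintype K] (p : K → ℝ) (x : K → I → ℝ) (i : I) : ℝ :=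
  ∑ k, p k * x k i

/-- Posterior `p^x(k|i)`. -/
def post {K I : Type*} [Fintype K] (p : K → ℝ) (x : K → I → ℝ) (i : I) (k : K) : ℝ :=
  if bar p x i ≠ 0 then x k i * p k / bar p x i else p k

/-- The set `NR[x,ε,p]` of (x,ε)-non-revealing actions at p. -/
def NRset {K I : Type*} [Fintype K] [Fintype I] (x : K → I → ℝ) (ε : ℝ) (p : K → ℝ) :
    Finset I :=
  Finset.univ.filter fun i =>
    bar p x i ≠ 0 ∧ ∀ k, (1 - ε) * bar p x i ≤ x k i ∧ x k i ≤ (1 + ε) * bar p x i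

/-- The set `R[x,ε,p]` of (x,ε)-revealing actions at p. -/
def Rset {K I : Type*} [Fintype K] [Fintype I] (x : K → I → ℝ) (ε : ℝ) (p : K → ℝ) :
    Finset I :=
  (Finset.univ.filter fun i => bar p x i ≠ 0) \ NRset x ε p

/-- `x(A|k) = ∑_{i∈A} x(i|k)`. -/
def xOn {K I : Type*} (x : K → I → ℝ) (A : Finset I) (k : K) : ℝ := ∑ i ∈ A, x k i

/-- `x̄^p(A) = ∑_{i∈A} x̄^p(i)`. -/
def barOn {K I : Type*} [Fintype K] (p : K → ℝ) (x : K → I → ℝ) (A : Finset I) : ℝ :=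
  ∑ i ∈ A, bar p x i

/-- The ε-silent mapping `c_ε(x,p)`. -/
def silent {K I : Type*} [Fintype K] [Fintype I] (ε : ℝ) (x : K → I → ℝ) (p : K → ℝ) :
    K → I → ℝ :=
  fun k i =>
    if i ∈ NRset x ε p then
      ((1 - ε) * xOn x (NRset x ε p) k / barOn p x (NRset x ε p) + ε) * bar p x i
    else (1 - ε) * x k i + ε * bar p x i

lemma bar_nonneg {K I : Type*} [Fintype K] {p : K → ℝ} {x : K → I → ℝ}
    (hp : pSimplex p) (hx : ∀ k i, 0 ≤ x k i) (i : I) : 0 ≤ bar p x i :=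
  sum_nonneg fun k _ => mul_nonneg (hp.1 k) (hx k i)

lemma sum_bar_eq_one {K I : Type*} [Fintype K] [Fintype I] {p : K → ℝ} {x : K → I → ℝ}
    (hp : pSimplex p) (hx : MixedAction x) : ∑ i, bar p x i = 1 := by
  simp only [bar]
  rw [sum_comm]
  simp_rw [← mul_sum, hx.2, mul_one]
  exact hp.2

lemma pSimplex_post {K I : Type*} [Fintype K] {p : K → ℝ} {x : K → I → ℝ}
    (hp : pSimplex p) (hx : ∀ k i, 0 ≤ x k i) (i : I) : pSimplex (post p x i) := by
  unfold post
  split_ifs with h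
  · have hb : 0 < bar p x i := (bar_nonneg hp hx i).lt_of_ne' h
    refine ⟨fun k => div_nonneg (mul_nonneg (hx k i) (hp.1 k)) hb.le, ?_⟩
    rw [← sum_div, div_eq_one_iff_eq hb.ne']
    exact sum_congr rfl fun k _ => mul_comm _ _
  · exact hp

lemma pSimplex.sum_weights_eq_one {ι K : Type*} [Fintype ι] [Fintype K] {p : K → ℝ}
    {w : ι → ℝ} {P : ι → K → ℝ} (hp : pSimplex p) (hP : ∀ i, pSimplex (P i))
    (h : ∀ k, p k = ∑ i, w i * P i k) : ∑ i, w i = 1 := by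
  calc ∑ i, w i = ∑ i, w i * ∑ k, P i k := by simp only [(hP _).2, mul_one]
    _ = ∑ k, p k := by simp only [h, mul_sum]; exact sum_comm
    _ = 1 := hp.2

lemma concaveOn_stdSimplex_of_forall {K : Type*} [Fintype K] {f : (K → ℝ) → ℝ}
    (hf : ∀ p1 p2 t, pSimplex p1 → pSimplex p2 → 0 ≤ t → t ≤ 1 →
      t * f p1 + (1 - t) * f p2 ≤ f (fun k => t * p1 k + (1 - t) * p2 k)) :
    ConcaveOn ℝ (stdSimplex ℝ K) f := by
  refine ⟨convex_stdSimplex ℝ K, fun p1 hp1 p2 hp2 a b ha _ hab => ?_⟩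
  obtain rfl : b = 1 - a := by linarith
  simp only [smul_eq_mul]
  exact hf p1 p2 a hp1 hp2 ha (by linarith)

lemma ConcaveOn.sum_mul_le_of_mix {ι E : Type*} [Fintype ι] [AddCommGroup E] [Module ℝ E]
    {s : Set E} {f : E → ℝ} (hf : ConcaveOn ℝ s f) {w : ι → ℝ} {β : ι → ι → ℝ}
    {P P' : ι → E} (hw : ∀ i, 0 ≤ w i) (hβ0 : ∀ i i', 0 ≤ β i i')
    (hβrow : ∀ i, ∑ i', β i i' = 1) (hβcol : ∀ i', ∑ i, β i i' * w i = w i')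
    (hP : ∀ i, P i ∈ s) (hP' : ∀ i, P' i = ∑ i', β i i' • P i') :
    ∑ i, w i * f (P i) ≤ ∑ i, w i * f (P' i) := by
  calc ∑ i, w i * f (P i) = ∑ i, w i * ∑ i', β i i' * f (P i') := by
        simp only [mul_sum, ← mul_assoc]
        rw [sum_comm]
        simp only [mul_comm (w _), ← sum_mul, hβcol]
    _ ≤ ∑ i, w i * f (P' i) := by
        gcongr with i _
        · exact hw i
        · simpa only [hP', smul_eq_mul] using
            hf.le_map_sum (fun i' _ => hβ0 i i') (hβrow i) (fun i' _ => hP i')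

lemma sInf_sub_le_of_bounded {α β : Type*} {P : α → Prop} {Q : β → Prop} {f g : α → β → ℝ}
    (hf : ∃ M, ∀ a b, P a → Q b → |f a b| ≤ M) (hg : ∃ M, ∀ a b, P a → Q b → |g a b| ≤ M)
    {a : α} {b : β} (ha : P a) (hb : Q b) :
    sInf {d | ∃ a b, P a ∧ Q b ∧ d = f a b - g a b} ≤ f a b - g a b := by
  obtain ⟨Mf, hMf⟩ := hf
  obtain ⟨Mg, hMg⟩ := hg
  refine csInf_le ⟨-(Mf + Mg), ?_⟩ ⟨a, b, ha, hb, rfl⟩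
  rintro _ ⟨a', b', ha', hb', rfl⟩
  linarith [(abs_le.1 (hMf a' b' ha' hb')).1, (abs_le.1 (hMg a' b' ha' hb')).2]

lemma le_sum_mul_sub_of_eq_off {Ω : Type*} [Fintype Ω] {r U V' V : Ω → ℝ} {ω0 : Ω}
    {D δ : ℝ} (hr0 : ∀ ω, 0 ≤ r ω) (hr1 : ∑ ω, r ω = 1)
    (hU : ∀ ω, ω ≠ ω0 → U ω = V' ω) (hV : ∀ ω, |V' ω - V ω| ≤ δ) (hD : D ≤ U ω0 - V' ω0) :
    r ω0 * D - 2 * (1 - r ω0) * δ + (V' ω0 - V ω0) ≤ ∑ ω, r ω * (U ω - V ω) := by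
  have hmass : ∑ ω ∈ univ.erase ω0, r ω = 1 - r ω0 := by
    rw [← hr1, ← add_sum_erase univ r (mem_univ ω0)]
    ring
  have hrest : -((1 - r ω0) * δ) ≤ ∑ ω ∈ univ.erase ω0, r ω * (U ω - V ω) := by
    rw [← hmass, sum_mul, ← sum_neg_distrib]
    refine sum_le_sum fun ω hω => ?_
    rw [hU ω (ne_of_mem_erase hω)]
    nlinarith [(abs_le.1 (hV ω)).1, hr0 ω]
  have hr_le : r ω0 ≤ 1 := hr1 ▸ single_le_sum (fun ω _ => hr0 ω) (mem_univ ω0)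
  rw [← add_sum_erase univ _ (mem_univ ω0)]
  nlinarith [mul_le_mul_of_nonneg_left hD (hr0 ω0),
    mul_nonneg (sub_nonneg.2 hr_le) (sub_nonneg.2 (abs_le.1 (hV ω0)).2)]

lemma le_sum_sub_sum_of_forall {I J Ω : Type*} [Fintype I] [Fintype J] [Fintype Ω]
    {a : I → ℝ} {b : J → ℝ} {r : I → J → Ω → ℝ} {U V : I → J → Ω → ℝ} {F F' : I → J → ℝ}
    {ω0 : Ω} {D δ : ℝ} (ha0 : ∀ i, 0 ≤ a i) (ha1 : ∑ i, a i = 1) (hb0 : ∀ j, 0 ≤ b j)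
    (hb1 : ∑ j, b j = 1) (hF : ∀ j, ∑ i, a i * F i j ≤ ∑ i, a i * F' i j)
    (hG : ∀ i j, r i j ω0 * D - 2 * (1 - r i j ω0) * δ + (F' i j - F i j) ≤
      ∑ ω, r i j ω * (U i j ω - V i j ω)) :
    D * (∑ j, b j * ∑ i, r i j ω0 * a i) - 2 * (1 - ∑ j, b j * ∑ i, r i j ω0 * a i) * δ ≤
      (∑ i, ∑ j, ∑ ω, r i j ω * a i * b j * U i j ω) -
        ∑ i, ∑ j, ∑ ω, r i j ω * a i * b j * V i j ω := by
  have hmass : ∑ j, b j * ∑ i, a i = 1 := by simp only [ha1, mul_one, hb1]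
  have hshift : 0 ≤ ∑ j, b j * ∑ i, a i * (F' i j - F i j) := by
    refine sum_nonneg fun j _ => mul_nonneg (hb0 j) ?_
    simp only [mul_sub, sum_sub_distrib, sub_nonneg, hF j]
  calc D * (∑ j, b j * ∑ i, r i j ω0 * a i) - 2 * (1 - ∑ j, b j * ∑ i, r i j ω0 * a i) * δ
      = ∑ j, b j * ∑ i, a i * (r i j ω0 * D - 2 * (1 - r i j ω0) * δ) := by
        conv_lhs => rw [← hmass]
        simp only [mul_sum, sum_mul, ← sum_sub_distrib]
        exact sum_congr rfl fun j _ => sum_congr rfl fun i _ => by ring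
    _ ≤ ∑ j, b j * ∑ i, a i * (r i j ω0 * D - 2 * (1 - r i j ω0) * δ) +
          ∑ j, b j * ∑ i, a i * (F' i j - F i j) := le_add_of_nonneg_right hshift
    _ = ∑ j, b j * ∑ i, a i *
          (r i j ω0 * D - 2 * (1 - r i j ω0) * δ + (F' i j - F i j)) := by
        simp only [mul_add, sum_add_distrib]
    _ ≤ ∑ j, b j * ∑ i, a i * ∑ ω, r i j ω * (U i j ω - V i j ω) := by
        gcongr with j _ i _
        exacts [hb0 j, ha0 i, hG i j]
    _ = _ := by
        simp only [mul_sum, ← sum_sub_distrib]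
        rw [sum_comm]
        exact sum_congr rfl fun i _ => sum_congr rfl fun j _ => sum_congr rfl fun ω _ => by ring

theorem convexification_expectation_bound_general {K L I J Ω : Type*}
    [Fintype K] [Fintype L] [Fintype I] [Fintype J] [Fintype Ω]
    (ω0 : Ω) (ρ : Ω → I → J → Ω → ℝ)
    (hρ0 : ∀ ω i j ω', 0 ≤ ρ ω i j ω')
    (hρ1 : ∀ ω i j, ∑ ω', ρ ω i j ω' = 1)
    (ε C : ℝ) (hC : 0 < C)
    (u v : (K → ℝ) → (L → ℝ) → Ω → ℝ)
    (hu_bdd : ∃ M : ℝ, ∀ p' q' ω, pSimplex p' → pSimplex q' → |u p' q' ω| ≤ M)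
    (hv_bdd : ∃ M : ℝ, ∀ p' q' ω, pSimplex p' → pSimplex q' → |v p' q' ω| ≤ M)
    (huv : ∀ p' q' ω, ω ≠ ω0 → pSimplex p' → pSimplex q' → u p' q' ω = v p' q' ω)
    (hlip : ∀ q' ω p1 p2, pSimplex q' → pSimplex p1 → pSimplex p2 →
      |v p1 q' ω - v p2 q' ω| ≤ C * ∑ k, |p1 k - p2 k|)
    (hconcave : ∀ q' p1 p2 t, pSimplex q' → pSimplex p1 → pSimplex p2 →
      0 ≤ t → t ≤ 1 →
      t * v p1 q' ω0 + (1 - t) * v p2 q' ω0 ≤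
        v (fun k => t * p1 k + (1 - t) * p2 k) q' ω0)
    (p : K → ℝ) (hp : pSimplex p) (q : L → ℝ) (hq : pSimplex q)
    (x x' : K → I → ℝ) (hx : MixedAction x) (hx' : MixedAction x')
    (y : L → J → ℝ) (hy : MixedAction y)
    (hconv : ∃ β : I → I → ℝ,
      (∀ i i', 0 ≤ β i i') ∧
      (∀ (i : I) (k : K), post p x' i k = ∑ i', β i i' * post p x i' k) ∧
      (∀ i : I, bar p x' i = bar p x i) ∧
      (∀ i' : I, ∑ i, β i i' * bar p x i = bar p x i') ∧
      (∀ i : I, ∑ k, |post p x' i k - post p x i k| ≤ ε)) :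
    sInf {d : ℝ | ∃ p' q', pSimplex p' ∧ pSimplex q' ∧ d = u p' q' ω0 - v p' q' ω0} *
        (∑ j, bar q y j * ∑ i, ρ ω0 i j ω0 * bar p x i) -
      2 * (1 - ∑ j, bar q y j * ∑ i, ρ ω0 i j ω0 * bar p x i) * ε * C ≤
    (∑ i, ∑ j, ∑ ω, ρ ω0 i j ω * bar p x' i * bar q y j *
        u (post p x' i) (post q y j) ω) -
      ∑ i, ∑ j, ∑ ω, ρ ω0 i j ω * bar p x i * bar q y j *
        v (post p x i) (post q y j) ω := by
  obtain ⟨β, hβ0, hβpost, hβbar, hβcol, hβε⟩ := hconv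
  have hpx := pSimplex_post hp hx.1
  have hpx' := pSimplex_post hp hx'.1
  have hqy := pSimplex_post hq hy.1
  have hclose : ∀ i j ω,
      |v (post p x' i) (post q y j) ω - v (post p x i) (post q y j) ω| ≤ ε * C := fun i j ω =>
    (hlip _ ω _ _ (hqy j) (hpx' i) (hpx i)).trans <| by
      rw [mul_comm ε]; exact mul_le_mul_of_nonneg_left (hβε i) hC.le
  have hjensen : ∀ j, ∑ i, bar p x i * v (post p x i) (post q y j) ω0 ≤
      ∑ i, bar p x i * v (post p x' i) (post q y j) ω0 := fun j =>
    (concaveOn_stdSimplex_of_forall fun p1 p2 t => hconcave _ p1 p2 t (hqy j)).sum_mul_le_of_mix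
      (bar_nonneg hp hx.1) hβ0 (fun i => (hpx' i).sum_weights_eq_one hpx (hβpost i))
      hβcol hpx fun i => funext fun k => by simp [hβpost]
  rw [funext hβbar, mul_assoc _ ε C]
  exact le_sum_sub_sum_of_forall (bar_nonneg hp hx.1) (sum_bar_eq_one hp hx)
    (bar_nonneg hq hy.1) (sum_bar_eq_one hq hy) hjensen fun i j =>
    le_sum_mul_sub_of_eq_off (hρ0 ω0 i j) (hρ1 ω0 i j)
      (fun ω hω => huv _ _ ω hω (hpx' i) (hqy j)) (hclose i j)
      (sInf_sub_le_of_bounded (P := pSimplex) (Q := pSimplex)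
        (hu_bdd.imp fun _ h a b => h a b ω0) (hv_bdd.imp fun _ h a b => h a b ω0) (hpx' i) (hqy j))

/-- key absorbing-game inequality (Lemma 3.9 of the paper):
E[x'](u) − E[x](v) ≥ D·R − 2·(1−R)·ε·C. -/
theorem convexification_expectation_bound {K L I J Ω : Type*}
    [Fintype K] [Fintype L] [Fintype I] [Fintype J] [Fintype Ω]
    [Nonempty K] [Nonempty L] [Nonempty I] [Nonempty J] [Nonempty Ω]
    (ω0 : Ω) (ρ : Ω → I → J → Ω → ℝ)
    (hρ0 : ∀ ω i j ω', 0 ≤ ρ ω i j ω')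
    (hρ1 : ∀ ω i j, ∑ ω', ρ ω i j ω' = 1)
    (ε C : ℝ) (hε : 0 < ε) (hC : 0 < C)
    (u v : (K → ℝ) → (L → ℝ) → Ω → ℝ)
    (hu_bdd : ∃ M : ℝ, ∀ p' q' ω, pSimplex p' → pSimplex q' → |u p' q' ω| ≤ M)
    (hv_bdd : ∃ M : ℝ, ∀ p' q' ω, pSimplex p' → pSimplex q' → |v p' q' ω| ≤ M)
    (huv : ∀ p' q' ω, ω ≠ ω0 → pSimplex p' → pSimplex q' → u p' q' ω = v p' q' ω)
    (hlip : ∀ q' ω p1 p2, pSimplex q' → pSimplex p1 → pSimplex p2 →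
      |v p1 q' ω - v p2 q' ω| ≤ C * ∑ k, |p1 k - p2 k|)
    (hconcave : ∀ q' p1 p2 t, pSimplex q' → pSimplex p1 → pSimplex p2 →
      0 ≤ t → t ≤ 1 →
      t * v p1 q' ω0 + (1 - t) * v p2 q' ω0 ≤
        v (fun k => t * p1 k + (1 - t) * p2 k) q' ω0)
    (p : K → ℝ) (hp : pSimplex p) (q : L → ℝ) (hq : pSimplex q)
    (x x' : K → I → ℝ) (hx : MixedAction x) (hx' : MixedAction x')
    (y : L → J → ℝ) (hy : MixedAction y)
    (hconv : ∃ β : I → I → ℝ,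
      (∀ i i', 0 ≤ β i i') ∧
      (∀ (i : I) (k : K), post p x' i k = ∑ i', β i i' * post p x i' k) ∧
      (∀ i : I, bar p x' i = bar p x i) ∧
      (∀ i' : I, ∑ i, β i i' * bar p x i = bar p x i') ∧
      (∀ i : I, ∑ k, |post p x' i k - post p x i k| ≤ ε)) :
    sInf {d : ℝ | ∃ p' q', pSimplex p' ∧ pSimplex q' ∧ d = u p' q' ω0 - v p' q' ω0} *
        (∑ j, bar q y j * ∑ i, ρ ω0 i j ω0 * bar p x i) -
      2 * (1 - ∑ j, bar q y j * ∑ i, ρ ω0 i j ω0 * bar p x i) * ε * C ≤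
    (∑ i, ∑ j, ∑ ω, ρ ω0 i j ω * bar p x' i * bar q y j *
        u (post p x' i) (post q y j) ω) -
      ∑ i, ∑ j, ∑ ω, ρ ω0 i j ω * bar p x i * bar q y j *
        v (post p x i) (post q y j) ω :=
  convexification_expectation_bound_general ω0 ρ hρ0 hρ1 ε C hC u v hu_bdd hv_bdd huv hlip hconcave
    p hp q hq x x' hx hx' y hy hconv
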